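/- arXiv:2102.07163 — 3 statements merged into one kernel-verified Lean document; each statement's English description precedes it below -/
import Mathlib

section
/- Suppose v_n ∈ H¹(ℝ³) satisfy ‖v_n‖_{L²} = ‖Q‖_{L²}, E_V(v_n) = E₀(Q), and ‖v_n‖²_{Ḣ¹_V} := ∫|∇v_n|² + V|v_n|² → ‖∇Q‖²_{L²}, where V ≥ 0. Then ‖v_n‖_{L⁴} → ‖Q‖_{L⁴}, ‖∇v_n‖_{L²} → ‖∇Q‖_{L²}, and ∫ V|v_n|² dx → 0. Consequently v_n is an optimizing sequence for the sharp Gagliardo–Nirenberg inequality with V = 0. -/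
open MeasureTheory Real Filter
noncomputable section

abbrev R3 : Type := EuclideanSpace ℝ (Fin 3)

/-- The `i`-th standard basis vector of `ℝ³`. -/
def e3 (i : Fin 3) : R3 := EuclideanSpace.single i 1

/-- Partial derivative of a complex-valued function. -/
def pd (f : R3 → ℂ) (i : Fin 3) (x : R3) : ℂ := fderiv ℝ f x (e3 i)

/-- Partial derivative of a real-valued function. -/
def pdR (f : R3 → ℝ) (i : Fin 3) (x : R3) : ℝ := fderiv ℝ f x (e3 i)

/-- Laplacian of a real-valued function. -/
def lapR (f : R3 → ℝ) (x : R3) : ℝ := ∑ i, fderiv ℝ (fun y => pdR f i y) x (e3 i)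

/-- Second partial derivative ∂ⱼ∂ₖ of a real-valued function. -/
def d2R (w : R3 → ℝ) (j k : Fin 3) (x : R3) : ℝ := fderiv ℝ (fun y => pdR w k y) x (e3 j)

/-- |∇f|² for a complex-valued function. -/
def gradSq (f : R3 → ℂ) (x : R3) : ℝ := ∑ i, ‖pd f i x‖^2

/-- |∇f|² for a real-valued function. -/
def gradSqR (f : R3 → ℝ) (x : R3) : ℝ := ∑ i, (pdR f i x)^2

/-! The energy identity expresses `‖v_n‖₄⁴` as an affine function of `‖v_n‖²_{Ḣ¹_V}`, so it
converges to `‖Q‖₄⁴`. Inverting the Gagliardo–Nirenberg inequality turns this into a lower bound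
`‖∇v_n‖₂² ≥ (‖v_n‖₄⁴ / (C₀‖Q‖₂))^{2/3} → ‖∇Q‖₂²`, while `‖∇v_n‖₂² ≤ ‖v_n‖²_{Ḣ¹_V} → ‖∇Q‖₂²`
because `V ≥ 0`. Squeezing gives the kinetic limit, and the potential term is the difference. -/

open Topology

theorem rpow_inv_div_le_of_le_mul_rpow {F C a p : ℝ} (hF : 0 ≤ F) (hC : 0 < C) (ha : 0 ≤ a)
    (hp : 0 < p) (h : F ≤ C * a ^ p) : (F / C) ^ p⁻¹ ≤ a := by
  rw [Real.rpow_inv_le_iff_of_pos (div_nonneg hF hC.le) ha hp, div_le_iff₀ hC, mul_comm]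
  exact h

theorem tendsto_of_le_mul_rpow_of_tendsto_add {a b F : ℕ → ℝ} {C p G : ℝ} (hC : 0 < C) (hp : 0 < p)
    (hG : 0 ≤ G) (ha : ∀ n, 0 ≤ a n) (hb : ∀ n, 0 ≤ b n) (hF : ∀ n, 0 ≤ F n)
    (hFa : ∀ n, F n ≤ C * a n ^ p) (hFlim : Tendsto F atTop (𝓝 (C * G ^ p)))
    (hab : Tendsto (fun n => a n + b n) atTop (𝓝 G)) :
    Tendsto a atTop (𝓝 G) ∧ Tendsto b atTop (𝓝 0) := by
  have hlower : Tendsto (fun n => (F n / C) ^ p⁻¹) atTop (𝓝 G) := by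
    have hGlim : (C * G ^ p / C) ^ p⁻¹ = G := by
      rw [mul_div_cancel_left₀ _ hC.ne', Real.rpow_rpow_inv hG hp.ne']
    rw [← hGlim]
    exact (hFlim.div_const C).rpow_const (Or.inr (inv_nonneg.mpr hp.le))
  have ha_lim : Tendsto a atTop (𝓝 G) :=
    tendsto_of_tendsto_of_tendsto_of_le_of_le hlower hab
      (fun n => rpow_inv_div_le_of_le_mul_rpow (hF n) hC (ha n) hp (hFa n))
      (fun n => le_add_of_nonneg_right (hb n))
  refine ⟨ha_lim, ?_⟩
  simpa using hab.sub ha_lim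

theorem gradSq_nonneg (f : R3 → ℂ) (x : R3) : 0 ≤ gradSq f x :=
  Finset.sum_nonneg fun _ _ => sq_nonneg _

theorem gradSqR_nonneg (f : R3 → ℝ) (x : R3) : 0 ≤ gradSqR f x :=
  Finset.sum_nonneg fun _ _ => sq_nonneg _

theorem stmt8_general (Q V : R3 → ℝ) (v : ℕ → R3 → ℂ) (C₀ : ℝ)
    (hVpos : ∀ x, 0 ≤ V x)
    (hQ4pos : 0 < ∫ x : R3, (Q x)^4)
    (hC0 : (∫ x : R3, (Q x)^4)
      = C₀ * Real.sqrt (∫ x : R3, (Q x)^2) * (∫ x : R3, gradSqR Q x) ^ ((3:ℝ)/2))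
    (hmass : ∀ n, (∫ x : R3, ‖v n x‖^2) = ∫ x : R3, (Q x)^2)
    (henergy : ∀ n, (1/2) * ((∫ x : R3, gradSq (v n) x) + (∫ x : R3, V x * ‖v n x‖^2))
        - (1/4) * (∫ x : R3, ‖v n x‖^4)
      = (1/2) * (∫ x : R3, gradSqR Q x) - (1/4) * (∫ x : R3, (Q x)^4))
    (hGN : ∀ n, (∫ x : R3, ‖v n x‖^4)
      ≤ C₀ * Real.sqrt (∫ x : R3, ‖v n x‖^2) * (∫ x : R3, gradSq (v n) x) ^ ((3:ℝ)/2))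
    (hH1V : Tendsto (fun n => (∫ x : R3, gradSq (v n) x) + (∫ x : R3, V x * ‖v n x‖^2))
      atTop (nhds (∫ x : R3, gradSqR Q x))) :
    Tendsto (fun n => ∫ x : R3, ‖v n x‖^4) atTop (nhds (∫ x : R3, (Q x)^4))
    ∧ Tendsto (fun n => ∫ x : R3, gradSq (v n) x) atTop (nhds (∫ x : R3, gradSqR Q x))
    ∧ Tendsto (fun n => ∫ x : R3, V x * ‖v n x‖^2) atTop (nhds 0) := by
  set C := C₀ * Real.sqrt (∫ x : R3, (Q x)^2)
  have hG : 0 ≤ ∫ x : R3, gradSqR Q x := integral_nonneg (gradSqR_nonneg Q)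
  have hC : 0 < C := pos_of_mul_pos_left (hC0 ▸ hQ4pos) (Real.rpow_nonneg hG _)
  have hF : Tendsto (fun n => ∫ x : R3, ‖v n x‖^4) atTop (𝓝 (∫ x : R3, (Q x)^4)) := by
    have hlim := ((hH1V.sub_const (∫ x : R3, gradSqR Q x)).const_mul 2).const_add
      (∫ x : R3, (Q x)^4)
    rw [sub_self, mul_zero, add_zero] at hlim
    refine hlim.congr fun n => ?_
    linarith [henergy n]
  obtain ⟨hgrad, hpot⟩ :=
    tendsto_of_le_mul_rpow_of_tendsto_add hC (by norm_num : (0:ℝ) < 3/2) hG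
    (fun n => integral_nonneg (gradSq_nonneg (v n)))
    (fun n => integral_nonneg fun x => mul_nonneg (hVpos x) (sq_nonneg _))
    (fun n => integral_nonneg fun x => by positivity)
    (fun n => hmass n ▸ hGN n) (hC0 ▸ hF) hH1V
  exact ⟨hF, hgrad, hpot⟩

/-- if `v_n ∈ H¹` have `‖v_n‖₂ = ‖Q‖₂`, `E_V(v_n) = E₀(Q)` and
`‖v_n‖²_{Ḣ¹_V} → ‖∇Q‖₂²` with `V ≥ 0`, then `‖v_n‖₄ → ‖Q‖₄`, `‖∇v_n‖₂ → ‖∇Q‖₂`,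
and `∫V|v_n|² → 0`; i.e. `v_n` is an optimizing sequence for sharp
Gagliardo–Nirenberg with `V = 0`. -/
theorem stmt8 (Q V : R3 → ℝ) (v : ℕ → R3 → ℂ) (C₀ : ℝ)
    (hVpos : ∀ x, 0 ≤ V x)
    (hQ2 : Integrable fun x => (Q x)^2)
    (hQ4 : Integrable fun x => (Q x)^4)
    (hQgrad : Integrable fun x => gradSqR Q x)
    (hQ2pos : 0 < ∫ x : R3, (Q x)^2)
    (hQ4pos : 0 < ∫ x : R3, (Q x)^4)
    (hQgradpos : 0 < ∫ x : R3, gradSqR Q x)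
    (hC0 : (∫ x : R3, (Q x)^4)
      = C₀ * Real.sqrt (∫ x : R3, (Q x)^2) * (∫ x : R3, gradSqR Q x) ^ ((3:ℝ)/2))
    (hdiff : ∀ n, Differentiable ℝ (v n))
    (hv2 : ∀ n, Integrable fun x => ‖v n x‖^2)
    (hv4 : ∀ n, Integrable fun x => ‖v n x‖^4)
    (hvgrad : ∀ n, Integrable fun x => gradSq (v n) x)
    (hvV : ∀ n, Integrable fun x => V x * ‖v n x‖^2)
    (hmass : ∀ n, (∫ x : R3, ‖v n x‖^2) = ∫ x : R3, (Q x)^2)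
    (henergy : ∀ n, (1/2) * ((∫ x : R3, gradSq (v n) x) + (∫ x : R3, V x * ‖v n x‖^2))
        - (1/4) * (∫ x : R3, ‖v n x‖^4)
      = (1/2) * (∫ x : R3, gradSqR Q x) - (1/4) * (∫ x : R3, (Q x)^4))
    (hGN : ∀ n, (∫ x : R3, ‖v n x‖^4)
      ≤ C₀ * Real.sqrt (∫ x : R3, ‖v n x‖^2) * (∫ x : R3, gradSq (v n) x) ^ ((3:ℝ)/2))
    (hH1V : Tendsto (fun n => (∫ x : R3, gradSq (v n) x) + (∫ x : R3, V x * ‖v n x‖^2))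
      atTop (nhds (∫ x : R3, gradSqR Q x))) :
    Tendsto (fun n => ∫ x : R3, ‖v n x‖^4) atTop (nhds (∫ x : R3, (Q x)^4))
    ∧ Tendsto (fun n => ∫ x : R3, gradSq (v n) x) atTop (nhds (∫ x : R3, gradSqR Q x))
    ∧ Tendsto (fun n => ∫ x : R3, V x * ‖v n x‖^2) atTop (nhds 0) :=
  stmt8_general Q V v C₀ hVpos hQ4pos hC0 hmass henergy hGN hH1V
end
end

section
/- Let V ≥ 0 with equality in the sharp Gagliardo–Nirenberg inequality ‖f‖_{L⁴}⁴ ≤ C₀‖f‖_{L²}(∫|∇f|² + V|f|²)^{3/2} never attained for nonzero f (C₀ the free sharp constant). If u₀ ∈ H¹(ℝ³) satisfies M(u₀) = M(Q), E_V(u₀) = E₀(Q), and ‖u₀‖_{Ḣ¹_V} < ‖∇Q‖_{L²}, and u : I → H¹ is a continuous curve with conserved mass and energy (M(u(t)) = M(u₀), E_V(u(t)) = E_V(u₀)) with u(t₀) = u₀, then ‖u(t)‖_{Ḣ¹_V} < ‖∇Q‖_{L²} for all t ∈ I. -/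
open MeasureTheory Real Filter
noncomputable section

/-!
At the threshold `‖f‖²_{Ḣ¹_V} = ‖∇Q‖²`, conservation of mass and energy forces
`‖u(t)‖⁴_{L⁴} = ‖Q‖⁴_{L⁴}`, i.e. equality in the sharp Gagliardo–Nirenberg inequality with
potential, which is excluded. So `t ↦ ‖u(t)‖²_{Ḣ¹_V}` never takes the value `‖∇Q‖²`; being
continuous on the preconnected set `I` and below it at `t₀`, it stays below by the
intermediate value theorem.
-/

-- `‖f‖²_{Ḣ¹_V}` in the paper's notation
def sobolevSqV (V : R3 → ℝ) (f : R3 → ℂ) : ℝ :=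
  (∫ x : R3, gradSq f x) + ∫ x : R3, V x * ‖f x‖ ^ 2

theorem IsPreconnected.forall_lt_of_forall_ne {α : Type*} [TopologicalSpace α] {I : Set α}
    {f : α → ℝ} {c : ℝ} {t₀ : α} (hI : IsPreconnected I) (hf : ContinuousOn f I)
    (hne : ∀ t ∈ I, f t ≠ c) (ht₀ : t₀ ∈ I) (hlt : f t₀ < c) : ∀ t ∈ I, f t < c := by
  intro t ht
  by_contra! hle
  obtain ⟨s, hs, hsc⟩ := hI.intermediate_value ht₀ ht hf ⟨hlt.le, hle⟩
  exact hne s hs hsc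

theorem sobolevSqV_ne_of_mass_energy_eq {Q V : R3 → ℝ} {C₀ : ℝ} {f : R3 → ℂ}
    (hQ2pos : 0 < ∫ x : R3, (Q x) ^ 2)
    (hC0 : (∫ x : R3, (Q x) ^ 4)
      = C₀ * Real.sqrt (∫ x : R3, (Q x) ^ 2) * (∫ x : R3, gradSqR Q x) ^ ((3:ℝ)/2))
    (hmass : (∫ x : R3, ‖f x‖ ^ 2) = ∫ x : R3, (Q x) ^ 2)
    (henergy : (1/2) * sobolevSqV V f - (1/4) * (∫ x : R3, ‖f x‖ ^ 4)
      = (1/2) * (∫ x : R3, gradSqR Q x) - (1/4) * (∫ x : R3, (Q x) ^ 4))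
    (hnever : (∫ x : R3, ‖f x‖ ^ 2) ≠ 0 →
      (∫ x : R3, ‖f x‖ ^ 4) ≠ C₀ * Real.sqrt (∫ x : R3, ‖f x‖ ^ 2)
        * sobolevSqV V f ^ ((3:ℝ)/2)) :
    sobolevSqV V f ≠ ∫ x : R3, gradSqR Q x := by
  intro hK
  have hL4 : (∫ x : R3, ‖f x‖ ^ 4) = ∫ x : R3, (Q x) ^ 4 := by
    rw [hK] at henergy
    linarith
  exact hnever (hmass ▸ hQ2pos.ne') (by rw [hL4, hmass, hK]; exact hC0)

theorem stmt9_general (Q V : R3 → ℝ) (u : ℝ → R3 → ℂ) (I : Set ℝ) (t₀ : ℝ) (C₀ : ℝ)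
    (hI : IsPreconnected I) (ht₀ : t₀ ∈ I)
    (hQ2pos : 0 < ∫ x : R3, (Q x)^2)
    (hC0 : (∫ x : R3, (Q x)^4)
      = C₀ * Real.sqrt (∫ x : R3, (Q x)^2) * (∫ x : R3, gradSqR Q x) ^ ((3:ℝ)/2))
    (hudiff : ∀ t ∈ I, Differentiable ℝ (u t))
    (hu2 : ∀ t ∈ I, Integrable fun x => ‖u t x‖^2)
    (hu4 : ∀ t ∈ I, Integrable fun x => ‖u t x‖^4)
    (hugrad : ∀ t ∈ I, Integrable fun x => gradSq (u t) x)
    (huV : ∀ t ∈ I, Integrable fun x => V x * ‖u t x‖^2)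
    (hN : ContinuousOn
      (fun t => (∫ x : R3, gradSq (u t) x) + (∫ x : R3, V x * ‖u t x‖^2)) I)
    (hmass : ∀ t ∈ I, (∫ x : R3, ‖u t x‖^2) = ∫ x : R3, (Q x)^2)
    (henergy : ∀ t ∈ I,
      (1/2) * ((∫ x : R3, gradSq (u t) x) + (∫ x : R3, V x * ‖u t x‖^2))
        - (1/4) * (∫ x : R3, ‖u t x‖^4)
      = (1/2) * (∫ x : R3, gradSqR Q x) - (1/4) * (∫ x : R3, (Q x)^4))
    (hnever : ∀ f : R3 → ℂ, Differentiable ℝ f →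
      (Integrable fun x => ‖f x‖^2) → (Integrable fun x => ‖f x‖^4) →
      (Integrable fun x => gradSq f x) → (Integrable fun x => V x * ‖f x‖^2) →
      (∫ x : R3, ‖f x‖^2) ≠ 0 →
      (∫ x : R3, ‖f x‖^4) ≠ C₀ * Real.sqrt (∫ x : R3, ‖f x‖^2)
        * ((∫ x : R3, gradSq f x) + (∫ x : R3, V x * ‖f x‖^2)) ^ ((3:ℝ)/2))
    (hstart : (∫ x : R3, gradSq (u t₀) x) + (∫ x : R3, V x * ‖u t₀ x‖^2)
      < ∫ x : R3, gradSqR Q x) :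
    ∀ t ∈ I, (∫ x : R3, gradSq (u t) x) + (∫ x : R3, V x * ‖u t x‖^2)
      < ∫ x : R3, gradSqR Q x :=
  hI.forall_lt_of_forall_ne (f := fun t => sobolevSqV V (u t)) hN
    (fun t ht => sobolevSqV_ne_of_mass_energy_eq hQ2pos hC0 (hmass t ht) (henergy t ht)
      (hnever (u t) (hudiff t ht) (hu2 t ht) (hu4 t ht) (hugrad t ht) (huV t ht)))
    ht₀ hstart

/-- non-attainment of equality in the sharp Gagliardo–Nirenberg
inequality with potential, together with conservation of mass and energy and
continuity of the flow, propagates the bound `‖u(t)‖_{Ḣ¹_V} < ‖∇Q‖_{L²}` from the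
initial time to the whole interval. -/
theorem stmt9 (Q V : R3 → ℝ) (u : ℝ → R3 → ℂ) (I : Set ℝ) (t₀ : ℝ) (C₀ : ℝ)
    (hVpos : ∀ x, 0 ≤ V x)
    (hI : IsPreconnected I) (ht₀ : t₀ ∈ I)
    (hQ2pos : 0 < ∫ x : R3, (Q x)^2)
    (hC0 : (∫ x : R3, (Q x)^4)
      = C₀ * Real.sqrt (∫ x : R3, (Q x)^2) * (∫ x : R3, gradSqR Q x) ^ ((3:ℝ)/2))
    (hudiff : ∀ t ∈ I, Differentiable ℝ (u t))
    (hu2 : ∀ t ∈ I, Integrable fun x => ‖u t x‖^2)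
    (hu4 : ∀ t ∈ I, Integrable fun x => ‖u t x‖^4)
    (hugrad : ∀ t ∈ I, Integrable fun x => gradSq (u t) x)
    (huV : ∀ t ∈ I, Integrable fun x => V x * ‖u t x‖^2)
    (hN : ContinuousOn
      (fun t => (∫ x : R3, gradSq (u t) x) + (∫ x : R3, V x * ‖u t x‖^2)) I)
    (hmass : ∀ t ∈ I, (∫ x : R3, ‖u t x‖^2) = ∫ x : R3, (Q x)^2)
    (henergy : ∀ t ∈ I,
      (1/2) * ((∫ x : R3, gradSq (u t) x) + (∫ x : R3, V x * ‖u t x‖^2))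
        - (1/4) * (∫ x : R3, ‖u t x‖^4)
      = (1/2) * (∫ x : R3, gradSqR Q x) - (1/4) * (∫ x : R3, (Q x)^4))
    (hnever : ∀ f : R3 → ℂ, Differentiable ℝ f →
      (Integrable fun x => ‖f x‖^2) → (Integrable fun x => ‖f x‖^4) →
      (Integrable fun x => gradSq f x) → (Integrable fun x => V x * ‖f x‖^2) →
      (∫ x : R3, ‖f x‖^2) ≠ 0 →
      (∫ x : R3, ‖f x‖^4) ≠ C₀ * Real.sqrt (∫ x : R3, ‖f x‖^2)
        * ((∫ x : R3, gradSq f x) + (∫ x : R3, V x * ‖f x‖^2)) ^ ((3:ℝ)/2))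
    (hstart : (∫ x : R3, gradSq (u t₀) x) + (∫ x : R3, V x * ‖u t₀ x‖^2)
      < ∫ x : R3, gradSqR Q x) :
    ∀ t ∈ I, (∫ x : R3, gradSq (u t) x) + (∫ x : R3, V x * ‖u t x‖^2)
      < ∫ x : R3, gradSqR Q x :=
  stmt9_general Q V u I t₀ C₀ hI ht₀ hQ2pos hC0 hudiff hu2 hu4 hugrad huV hN hmass henergy hnever
    hstart
end
end

section
/- Suppose u = (1+α)Q(·−y) + h with α ∈ ℝ, |α| ≤ 1, h ∈ H¹(ℝ³;ℂ) satisfying the orthogonality ⟨∇Q(·−y), ∇h₁⟩ = 0. Define δ := ∫|∇Q|² - ∫(|∇u|² + V|u|²). Then δ = -2α∫|∇Q|² dx - α²∫|∇Q|² dx - ∫V|u|² dx - ∫|∇h|² dx. In particular, if additionally ‖h‖²_{H¹} + ∫V|u|² ≤ Cα², then δ = -2α∫|∇Q|² + O(α²), so |α| ∼ δ for |α| small and δ > 0. -/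
open MeasureTheory Real Filter
noncomputable section

/-!
With `c = 1 + α`, pointwise `|∇u|² = c² |∇Q(· - y)|² + 2c ∇Q(· - y) · ∇(Re h) + |∇h|²`. After
integration the cross term vanishes by the orthogonality condition and translation invariance
turns the first term into `c² ∫|∇Q|²`; expanding `c² = 1 + 2α + α²` gives the identity. The
error `δ + 2α∫|∇Q|² = -(α²∫|∇Q|² + ∫V|u|² + ∫|∇h|²)` is then a sum of nonnegative terms.
-/

lemma Complex.norm_ofReal_add_sq (a : ℝ) (z : ℂ) :
    ‖(a : ℂ) + z‖ ^ 2 = a ^ 2 + 2 * a * z.re + ‖z‖ ^ 2 := by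
  simp only [Complex.sq_norm, Complex.normSq_apply, Complex.add_re, Complex.add_im,
    Complex.ofReal_re, Complex.ofReal_im]
  ring

lemma re_pd {h : R3 → ℂ} {x : R3} (hh : DifferentiableAt ℝ h x) (i : Fin 3) :
    (pd h i x).re = fderiv ℝ (fun z => (h z).re) x (e3 i) := by
  have hre : HasFDerivAt (fun z => (h z).re) (Complex.reCLM.comp (fderiv ℝ h x)) x :=
    Complex.reCLM.hasFDerivAt.comp x hh.hasFDerivAt
  rw [hre.fderiv]
  rfl

lemma pd_ofReal_mul_comp_sub_add {Q : R3 → ℝ} {h : R3 → ℂ} {y x : R3}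
    (hQ : DifferentiableAt ℝ Q (x - y)) (hh : DifferentiableAt ℝ h x) (c : ℝ) (i : Fin 3) :
    pd (fun x => ((c * Q (x - y) : ℝ) : ℂ) + h x) i x
      = ((c * pdR Q i (x - y) : ℝ) : ℂ) + pd h i x := by
  have hQy : HasFDerivAt (fun x : R3 => Q (x - y)) (fderiv ℝ Q (x - y)) x :=
    hQ.hasFDerivAt.comp x ((hasFDerivAt_id x).sub_const y)
  have hu : HasFDerivAt (fun x => ((c * Q (x - y) : ℝ) : ℂ) + h x)
      (Complex.ofRealCLM.comp (c • fderiv ℝ Q (x - y)) + fderiv ℝ h x) x :=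
    (Complex.ofRealCLM.hasFDerivAt.comp x (hQy.const_mul c)).add hh.hasFDerivAt
  rw [pd, hu.fderiv]
  simp [pdR, pd]

lemma gradSq_ofReal_mul_comp_sub_add {Q : R3 → ℝ} {h : R3 → ℂ} {y x : R3}
    (hQ : DifferentiableAt ℝ Q (x - y)) (hh : DifferentiableAt ℝ h x) (c : ℝ) :
    gradSq (fun x => ((c * Q (x - y) : ℝ) : ℂ) + h x) x
      = c ^ 2 * gradSqR Q (x - y)
        + 2 * c * ∑ j, pdR Q j (x - y) * fderiv ℝ (fun z => (h z).re) x (e3 j)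
        + gradSq h x := by
  simp only [gradSq, gradSqR, Finset.mul_sum, ← Finset.sum_add_distrib]
  refine Finset.sum_congr rfl fun i _ => ?_
  rw [pd_ofReal_mul_comp_sub_add hQ hh, Complex.norm_ofReal_add_sq, re_pd hh]
  ring

lemma integral_gradSq_ofReal_mul_comp_sub_add {Q : R3 → ℝ} {h : R3 → ℂ} (y : R3)
    (hQ : Differentiable ℝ Q) (hh : Differentiable ℝ h) (c : ℝ)
    (hQgrad : Integrable fun x => gradSqR Q x) (hhgrad : Integrable fun x => gradSq h x)
    (hcross : Integrable fun x =>
      ∑ j, pdR Q j (x - y) * fderiv ℝ (fun z => (h z).re) x (e3 j)) :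
    ∫ x, gradSq (fun x => ((c * Q (x - y) : ℝ) : ℂ) + h x) x
      = c ^ 2 * (∫ x, gradSqR Q x)
        + 2 * c * (∫ x, ∑ j, pdR Q j (x - y) * fderiv ℝ (fun z => (h z).re) x (e3 j))
        + ∫ x, gradSq h x := by
  have hQy : Integrable fun x => c ^ 2 * gradSqR Q (x - y) :=
    (hQgrad.comp_sub_right y).const_mul _
  have hcross' := hcross.const_mul (2 * c)
  have hsum : Integrable fun x => c ^ 2 * gradSqR Q (x - y)
      + 2 * c * ∑ j, pdR Q j (x - y) * fderiv ℝ (fun z => (h z).re) x (e3 j) :=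
    hQy.add hcross'
  simp_rw [gradSq_ofReal_mul_comp_sub_add (hQ _) (hh _) c]
  rw [integral_add hsum hhgrad, integral_add hQy hcross', integral_const_mul, integral_const_mul,
    integral_sub_right_eq_self (fun x => gradSqR Q x) y]

lemma integral_gradSqR_nonneg (Q : R3 → ℝ) : 0 ≤ ∫ x, gradSqR Q x :=
  integral_nonneg fun _ => Finset.sum_nonneg fun _ _ => sq_nonneg _

lemma integral_gradSq_nonneg (h : R3 → ℂ) : 0 ≤ ∫ x, gradSq h x :=
  integral_nonneg fun _ => Finset.sum_nonneg fun _ _ => sq_nonneg _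

lemma abs_add_two_mul_le_of_eq {δ α G W H N C : ℝ}
    (hδ : δ = -2 * α * G - α ^ 2 * G - W - H)
    (hG : 0 ≤ G) (hW : 0 ≤ W) (hH : 0 ≤ H) (hN : 0 ≤ N) (hbd : N + H + W ≤ C * α ^ 2) :
    |δ + 2 * α * G| ≤ (C + G) * α ^ 2 := by
  have hsum : 0 ≤ α ^ 2 * G + W + H := by positivity
  rw [show δ + 2 * α * G = -(α ^ 2 * G + W + H) by rw [hδ]; ring, abs_neg, abs_of_nonneg hsum]
  nlinarith

theorem stmt13_general (Q V : R3 → ℝ) (h : R3 → ℂ) (α : ℝ) (y : R3)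
    (hVpos : ∀ x, 0 ≤ V x)
    (hQdiff : Differentiable ℝ Q) (hhdiff : Differentiable ℝ h)
    (hQgrad : Integrable fun x => gradSqR Q x)
    (hhgrad : Integrable fun x => gradSq h x)
    (hcross : Integrable fun x =>
      ∑ j, pdR Q j (x - y) * fderiv ℝ (fun z => (h z).re) x (e3 j))
    (horth : (∫ x : R3,
      ∑ j, pdR Q j (x - y) * fderiv ℝ (fun z => (h z).re) x (e3 j)) = 0) :
    ∀ u : R3 → ℂ, (u = fun x => (((1 + α) * Q (x - y) : ℝ) : ℂ) + h x) →
    (Integrable fun x => V x * ‖u x‖^2) →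
    (Integrable fun x => gradSq u x) →
    ((∫ x : R3, gradSqR Q x) - ((∫ x : R3, gradSq u x) + (∫ x : R3, V x * ‖u x‖^2))
        = -2 * α * (∫ x : R3, gradSqR Q x) - α^2 * (∫ x : R3, gradSqR Q x)
          - (∫ x : R3, V x * ‖u x‖^2) - (∫ x : R3, gradSq h x))
    ∧ ∀ C : ℝ, 0 ≤ C →
        ((∫ x : R3, ‖h x‖^2) + (∫ x : R3, gradSq h x) + (∫ x : R3, V x * ‖u x‖^2)
          ≤ C * α^2) →
        |((∫ x : R3, gradSqR Q x)
            - ((∫ x : R3, gradSq u x) + (∫ x : R3, V x * ‖u x‖^2)))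
          + 2 * α * (∫ x : R3, gradSqR Q x)|
          ≤ (C + (∫ x : R3, gradSqR Q x)) * α^2 := by
  rintro u rfl - -
  have hgrad :=
    integral_gradSq_ofReal_mul_comp_sub_add y hQdiff hhdiff (1 + α) hQgrad hhgrad hcross
  rw [horth] at hgrad
  refine ⟨by rw [hgrad]; ring, fun C _ hbd => abs_add_two_mul_le_of_eq (by rw [hgrad]; ring)
    (integral_gradSqR_nonneg Q) (integral_nonneg fun x => mul_nonneg (hVpos x) (sq_nonneg _))
    (integral_gradSq_nonneg h) (integral_nonneg fun _ => sq_nonneg _) hbd⟩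

/-- if `u = (1+α)Q(·−y) + h` with the orthogonality
`⟨∇Q(·−y), ∇h₁⟩ = 0`, then
`δ = -2α∫|∇Q|² - α²∫|∇Q|² - ∫V|u|² - ∫|∇h|²` where
`δ = ∫|∇Q|² - ∫(|∇u|² + V|u|²)`; and if in addition
`‖h‖²_{H¹} + ∫V|u|² ≤ Cα²`, then `δ = -2α∫|∇Q|² + O(α²)`. -/
theorem stmt13 (Q V : R3 → ℝ) (h : R3 → ℂ) (α : ℝ) (y : R3)
    (hα : |α| ≤ 1) (hVpos : ∀ x, 0 ≤ V x)
    (hQdiff : Differentiable ℝ Q) (hhdiff : Differentiable ℝ h)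
    (hQgrad : Integrable fun x => gradSqR Q x)
    (hh2 : Integrable fun x => ‖h x‖^2)
    (hhgrad : Integrable fun x => gradSq h x)
    (hcross : Integrable fun x =>
      ∑ j, pdR Q j (x - y) * fderiv ℝ (fun z => (h z).re) x (e3 j))
    (horth : (∫ x : R3,
      ∑ j, pdR Q j (x - y) * fderiv ℝ (fun z => (h z).re) x (e3 j)) = 0) :
    ∀ u : R3 → ℂ, (u = fun x => (((1 + α) * Q (x - y) : ℝ) : ℂ) + h x) →
    (Integrable fun x => V x * ‖u x‖^2) →
    (Integrable fun x => gradSq u x) →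
    ((∫ x : R3, gradSqR Q x) - ((∫ x : R3, gradSq u x) + (∫ x : R3, V x * ‖u x‖^2))
        = -2 * α * (∫ x : R3, gradSqR Q x) - α^2 * (∫ x : R3, gradSqR Q x)
          - (∫ x : R3, V x * ‖u x‖^2) - (∫ x : R3, gradSq h x))
    ∧ ∀ C : ℝ, 0 ≤ C →
        ((∫ x : R3, ‖h x‖^2) + (∫ x : R3, gradSq h x) + (∫ x : R3, V x * ‖u x‖^2)
          ≤ C * α^2) →
        |((∫ x : R3, gradSqR Q x)
            - ((∫ x : R3, gradSq u x) + (∫ x : R3, V x * ‖u x‖^2)))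
          + 2 * α * (∫ x : R3, gradSqR Q x)|
          ≤ (C + (∫ x : R3, gradSqR Q x)) * α^2 :=
  stmt13_general Q V h α y hVpos hQdiff hhdiff hQgrad hhgrad hcross horth
end
end
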